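/- Let v̂_1,…,v̂_{j−1} be orthonormal unit vectors with projection \hat{Π}_{j−1}, and v_j a unit vector orthogonal to v₁,…,v_{j−1} whose projection is Π_{j−1}. Define ṽ_j = (I − \hat{Π}_{j−1})v_j / ‖(I − \hat{Π}_{j−1})v_j‖₂ (assuming the denominator nonzero). Then ‖ṽ_j − v_j‖₂ ≤ 2‖\hat{Π}_{j−1} − Π_{j−1}‖_F. -/

import Mathlib

open BigOperators Matrix
open scoped Classical

noncomputable def enorm' {p : ℕ} (v : Fin p → ℝ) : ℝ := Real.sqrt (∑ i, (v i) ^ 2)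

noncomputable def fnorm {p : ℕ} (A : Matrix (Fin p) (Fin p) ℝ) : ℝ :=
  Real.sqrt (∑ i, ∑ j, (A i j) ^ 2)

def outer {p : ℕ} (u v : Fin p → ℝ) : Matrix (Fin p) (Fin p) ℝ :=
  Matrix.of fun i j => u i * v j


/-!
Let `P` be the orthogonal projection onto the span of the `v̂ₖ` and `w = vⱼ - P vⱼ`. Pythagoras gives
`‖w‖² + ‖P vⱼ‖² = 1` and `⟪w, vⱼ⟫ = ‖w‖²`, hence `‖w / ‖w‖ - vⱼ‖² = 2 - 2‖w‖ ≤ 2 (1 - ‖w‖²) = 2 ‖P vⱼ‖²`.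
Since `Π vⱼ = 0`, `P vⱼ = (P - Π) vⱼ`, whose norm is at most the Frobenius norm of `P - Π`.
-/

open RealInnerProductSpace

theorem norm_inv_norm_smul_sub_le_of_inner_eq_zero {E : Type*} [NormedAddCommGroup E]
    [InnerProductSpace ℝ E] {x y : E} (hx : ‖x‖ = 1) (hxy : ⟪x - y, y⟫ = 0) :
    ‖‖x - y‖⁻¹ • (x - y) - x‖ ≤ √2 * ‖y‖ := by
  have hpyth : ‖x - y‖ ^ 2 + ‖y‖ ^ 2 = 1 := by
    rw [sq, sq, ← norm_add_sq_eq_norm_sq_add_norm_sq_real hxy, sub_add_cancel, hx, one_mul]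
  have hinner : ⟪x - y, x⟫ = ‖x - y‖ ^ 2 := by
    rw [← real_inner_self_eq_norm_sq, inner_sub_right _ x y, hxy, sub_zero]
  rcases eq_or_ne (x - y) 0 with hw | hw
  · -- `0⁻¹ • 0 = 0`, so the left side is `‖x‖ = ‖y‖`
    rw [sub_eq_zero.mp hw, sub_self, smul_zero, zero_sub, norm_neg]
    exact le_mul_of_one_le_left (norm_nonneg y) (Real.one_le_sqrt.mpr one_le_two)
  have hr : 0 < ‖x - y‖ := norm_pos_iff.mpr hw
  have hr1 : ‖x - y‖ ≤ 1 := by nlinarith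
  rw [← pow_le_pow_iff_left₀ (norm_nonneg _) (by positivity) two_ne_zero, mul_pow,
    Real.sq_sqrt zero_le_two, norm_sub_sq_real, norm_smul, real_inner_smul_left, hinner, hx,
    norm_inv, norm_norm, inv_mul_cancel₀ hr.ne']
  field_simp
  nlinarith

theorem sub_mulVec_dotProduct_mulVec_eq_zero {n : Type*} [Fintype n] {P : Matrix n n ℝ}
    (hPt : Pᵀ = P) (hP : IsIdempotentElem P) (x : n → ℝ) :
    (x - P *ᵥ x) ⬝ᵥ P *ᵥ x = 0 := by
  rw [sub_dotProduct, sub_eq_zero, dotProduct_mulVec (P *ᵥ x), ← mulVec_transpose, hPt,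
    mulVec_mulVec, hP.eq, dotProduct_comm]

theorem transpose_sum_vecMulVec_self {n ι : Type*} (s : Finset ι) (u : ι → n → ℝ) :
    (∑ k ∈ s, vecMulVec (u k) (u k))ᵀ = ∑ k ∈ s, vecMulVec (u k) (u k) := by
  simp only [transpose_sum, transpose_vecMulVec]

theorem isIdempotentElem_sum_vecMulVec_self {n ι : Type*} [Fintype n] [Fintype ι]
    [DecidableEq ι] (u : ι → n → ℝ) (hu : ∀ k l, u k ⬝ᵥ u l = if k = l then 1 else 0) :
    IsIdempotentElem (∑ k, vecMulVec (u k) (u k)) := by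
  simp only [IsIdempotentElem, Finset.sum_mul_sum, vecMulVec_mul_vecMulVec, vecMulVec_smul, hu]
  simp only [ite_smul, one_smul, zero_smul, Finset.sum_ite_eq, Finset.mem_univ, if_true]

theorem sum_vecMulVec_self_mulVec_eq_zero {n ι : Type*} [Fintype n] (s : Finset ι)
    (u : ι → n → ℝ) (x : n → ℝ) (h : ∀ k ∈ s, u k ⬝ᵥ x = 0) :
    (∑ k ∈ s, vecMulVec (u k) (u k)) *ᵥ x = 0 := by
  rw [sum_mulVec]
  exact Finset.sum_eq_zero fun k hk => by
    rw [vecMulVec_mulVec, h k hk, MulOpposite.op_zero, zero_smul]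

theorem inner_toLp_toLp_real {ι : Type*} [Fintype ι] (x y : ι → ℝ) :
    ⟪(WithLp.toLp 2 x : EuclideanSpace ℝ ι), WithLp.toLp 2 y⟫ = x ⬝ᵥ y := by
  rw [EuclideanSpace.inner_toLp_toLp, star_trivial, dotProduct_comm]

theorem outer_eq_vecMulVec {p : ℕ} : (outer : (Fin p → ℝ) → (Fin p → ℝ) → _) = vecMulVec :=
  rfl

theorem enorm'_eq_norm_toLp {p : ℕ} (x : Fin p → ℝ) :
    enorm' x = ‖(WithLp.toLp 2 x : EuclideanSpace ℝ (Fin p))‖ := by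
  simp [enorm', EuclideanSpace.norm_eq]

theorem fnorm_nonneg {p : ℕ} (A : Matrix (Fin p) (Fin p) ℝ) : 0 ≤ fnorm A :=
  Real.sqrt_nonneg _

theorem enorm'_mulVec_le {p : ℕ} (A : Matrix (Fin p) (Fin p) ℝ) (x : Fin p → ℝ) :
    enorm' (A *ᵥ x) ≤ fnorm A * enorm' x := by
  rw [enorm', fnorm, enorm', ← Real.sqrt_mul (by positivity), Finset.sum_mul]
  exact Real.sqrt_le_sqrt <| Finset.sum_le_sum fun i _ =>
    Finset.sum_mul_sq_le_sq_mul_sq Finset.univ (A i) x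

theorem stmt14_general {p m : ℕ} (v vh : Fin m → Fin p → ℝ)
    (horthoh : ∀ k l, vh k ⬝ᵥ vh l = if k = l then (1 : ℝ) else 0)
    (vj : Fin p → ℝ) (hunit : enorm' vj = 1) (hperp : ∀ k, vj ⬝ᵥ v k = 0) :
    enorm' ((enorm' (vj - (∑ k, outer (vh k) (vh k)) *ᵥ vj))⁻¹ •
        (vj - (∑ k, outer (vh k) (vh k)) *ᵥ vj) - vj) ≤
      2 * fnorm ((∑ k, outer (vh k) (vh k)) - ∑ k, outer (v k) (v k)) := by
  rw [outer_eq_vecMulVec]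
  set P := ∑ k, vecMulVec (vh k) (vh k)
  set Q := ∑ k, vecMulVec (v k) (v k)
  have hQ : Q *ᵥ vj = 0 :=
    sum_vecMulVec_self_mulVec_eq_zero _ _ _ fun k _ => by rw [dotProduct_comm, hperp k]
  have horth : ⟪WithLp.toLp 2 vj - WithLp.toLp 2 (P *ᵥ vj),
      (WithLp.toLp 2 (P *ᵥ vj) : EuclideanSpace ℝ (Fin p))⟫ = 0 := by
    rw [← WithLp.toLp_sub, inner_toLp_toLp_real]
    exact sub_mulVec_dotProduct_mulVec_eq_zero (transpose_sum_vecMulVec_self _ _)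
      (isIdempotentElem_sum_vecMulVec_self vh horthoh) vj
  calc _ ≤ √2 * enorm' (P *ᵥ vj) := by
        simp only [enorm'_eq_norm_toLp, WithLp.toLp_sub, WithLp.toLp_smul] at hunit ⊢
        exact norm_inv_norm_smul_sub_le_of_inner_eq_zero hunit horth
    _ = √2 * enorm' ((P - Q) *ᵥ vj) := by rw [sub_mulVec, hQ, sub_zero]
    _ ≤ √2 * (fnorm (P - Q) * enorm' vj) := by gcongr; exact enorm'_mulVec_le _ _
    _ = √2 * fnorm (P - Q) := by rw [hunit, mul_one]
    _ ≤ 2 * fnorm (P - Q) := by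
        gcongr
        · exact fnorm_nonneg _
        · exact Real.sqrt_le_iff.mpr ⟨zero_le_two, by norm_num⟩

theorem stmt14 {p m : ℕ} (v vh : Fin m → Fin p → ℝ)
    (hortho : ∀ k l, v k ⬝ᵥ v l = if k = l then (1 : ℝ) else 0)
    (horthoh : ∀ k l, vh k ⬝ᵥ vh l = if k = l then (1 : ℝ) else 0)
    (vj : Fin p → ℝ) (hunit : enorm' vj = 1) (hperp : ∀ k, vj ⬝ᵥ v k = 0)
    (hne : enorm' (vj - (∑ k, outer (vh k) (vh k)) *ᵥ vj) ≠ 0) :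
    enorm' ((enorm' (vj - (∑ k, outer (vh k) (vh k)) *ᵥ vj))⁻¹ •
        (vj - (∑ k, outer (vh k) (vh k)) *ᵥ vj) - vj) ≤
      2 * fnorm ((∑ k, outer (vh k) (vh k)) - ∑ k, outer (v k) (v k)) :=
  stmt14_general v vh horthoh vj hunit hperp
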